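/- arXiv:math/9905055 — 5 statements merged into one kernel-verified Lean document; each statement's English description precedes it below -/
import Mathlib

section
/- The torsion subgroup of Γ/S is finite and its order is not divisible by the characteristic of k; that is, if char k = p > 0, then p does not divide the order of the torsion subgroup of Γ/S. -/
/-! `Γ/S` is finitely generated, so its torsion subgroup is finite. If `char k = p > 0`, the
Frobenius of `k` is injective, so `σ(pα, β) = σ(α, β) ^ p = 1` forces `σ(α, β) = 1`: thus
`pα ∈ S` implies `α ∈ S`, the group `Γ/S` has no element of order `p`, and Cauchy's theorem
shows that `p` does not divide the order of its torsion subgroup. -/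

theorem AddSubgroup.fg_of_addGroup_fg {G : Type*} [AddCommGroup G] [AddGroup.FG G]
    (H : AddSubgroup G) : AddGroup.FG H := by
  have : Module.Finite ℤ G := Module.Finite.iff_addGroup_fg.mpr ‹_›
  rw [AddGroup.fg_iff_addSubgroup_fg, ← H.toIntSubmodule_toAddSubgroup,
    ← Submodule.fg_iff_addSubgroup_fg]
  exact IsNoetherian.noetherian _

theorem AddCommGroup.finite_torsion_of_fg (G : Type*) [AddCommGroup G] [AddGroup.FG G] :
    Finite (torsion G) :=
  have := (torsion G).fg_of_addGroup_fg
  finite_of_fg_isAddTorsion _ fun x => AddSubmonoid.isOfFinAddOrder_coe.mp x.2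

theorem not_dvd_card_of_nsmul_eq_zero {G : Type*} [AddGroup G] [Finite G] {p : ℕ}
    (hp : p.Prime) (h : ∀ x : G, p • x = 0 → x = 0) : ¬ p ∣ Nat.card G := by
  have := Fact.mk hp
  intro hdvd
  obtain ⟨x, hx⟩ := exists_prime_addOrderOf_dvd_card' p hdvd
  rw [h x (hx ▸ addOrderOf_nsmul_eq_zero x), addOrderOf_zero] at hx
  exact hp.one_lt.ne hx

theorem QuotientAddGroup.eq_zero_of_nsmul_eq_zero {G : Type*} [AddCommGroup G]
    {S : AddSubgroup G} {m : ℕ} (hS : ∀ a, m • a ∈ S → a ∈ S) {x : G ⧸ S} (hx : m • x = 0) :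
    x = 0 := by
  induction x using QuotientAddGroup.induction_on with
  | H a =>
    rw [← QuotientAddGroup.mk_nsmul, QuotientAddGroup.eq_zero_iff] at hx
    exact (QuotientAddGroup.eq_zero_iff a).mpr (hS a hx)

theorem ExpChar.eq_one_of_pow_eq_one {R : Type*} [CommRing R] [IsReduced R] (p : ℕ)
    [ExpChar R p] {x : R} (hx : x ^ p = 1) : x = 1 := by
  simpa using (ExpChar.pow_prime_pow_mul_eq_one_iff p 1 1 x).mp (by simpa using hx)

theorem map_nsmul_of_map_add_eq_mul {Γ M : Type*} [AddMonoid Γ] [Group M] (f : Γ → M)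
    (hf : ∀ a b, f (a + b) = f a * f b) (m : ℕ) (a : Γ) : f (m • a) = f a ^ m :=
  map_nsmul (AddMonoidHom.mk' (fun a => Additive.ofMul (f a)) hf) m a

theorem stmt_13_general {k : Type*} [Field k] {n : ℕ}
    (σ : (Fin n → ℤ) → (Fin n → ℤ) → kˣ)
    (hmul₁ : ∀ α β γ, σ (α + β) γ = σ α γ * σ β γ)
    (S : AddSubgroup (Fin n → ℤ))
    (hS : ∀ α, α ∈ S ↔ ∀ β, σ α β = 1) :
    Finite (AddCommGroup.torsion ((Fin n → ℤ) ⧸ S)) ∧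
      ∀ p : ℕ, p ≠ 0 → CharP k p →
        ¬ p ∣ Nat.card (AddCommGroup.torsion ((Fin n → ℤ) ⧸ S)) := by
  have := AddCommGroup.finite_torsion_of_fg ((Fin n → ℤ) ⧸ S)
  refine ⟨this, fun p hp0 _ => ?_⟩
  have hp : p.Prime := (CharP.char_is_prime_or_zero k p).resolve_right hp0
  have := Fact.mk hp
  have hsat : ∀ α, p • α ∈ S → α ∈ S := by
    intro α hα
    rw [hS] at hα ⊢
    intro β
    refine Units.ext (ExpChar.eq_one_of_pow_eq_one p ?_)
    rw [← Units.val_pow_eq_pow_val, ← map_nsmul_of_map_add_eq_mul (σ · β) (hmul₁ · · β), hα,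
      Units.val_one]
  refine not_dvd_card_of_nsmul_eq_zero hp fun x hx => Subtype.ext ?_
  exact QuotientAddGroup.eq_zero_of_nsmul_eq_zero hsat (congrArg Subtype.val hx)

/-- `k` a field, `Γ = ℤⁿ`, `σ` an alternating bicharacter with radical `S`.
The torsion subgroup of `Γ/S` is finite and its order is not divisible by `char k`. -/
theorem stmt_13 {k : Type*} [Field k] {n : ℕ}
    (σ : (Fin n → ℤ) → (Fin n → ℤ) → kˣ)
    (halt : ∀ α, σ α α = 1)
    (hmul₁ : ∀ α β γ, σ (α + β) γ = σ α γ * σ β γ)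
    (hmul₂ : ∀ α β γ, σ α (β + γ) = σ α β * σ α γ)
    (S : AddSubgroup (Fin n → ℤ))
    (hS : ∀ α, α ∈ S ↔ ∀ β, σ α β = 1) :
    Finite (AddCommGroup.torsion ((Fin n → ℤ) ⧸ S)) ∧
      ∀ p : ℕ, p ≠ 0 → CharP k p →
        ¬ p ∣ Nat.card (AddCommGroup.torsion ((Fin n → ℤ) ⧸ S)) :=
  stmt_13_general σ hmul₁ S hS
end

section
/- Assume k is algebraically closed. Then: (a) the fixed subalgebra (kΓ)^{S^⊥} of the group algebra kΓ under the action of S^⊥ equals kS; (b) every S^⊥-stable ideal I of kΓ is generated by its contraction to kS, i.e., I = (kΓ)(I ∩ kS). -/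
/-- The character `α ↦ ∏ᵢ hᵢ^{αᵢ}` of `Γ = ℤⁿ` attached to `h ∈ (kˣ)ⁿ`. -/
def powChar {k : Type*} [Field k] {n : ℕ} (h : Fin n → kˣ) :
    Multiplicative (Fin n → ℤ) →* kˣ where
  toFun α := ∏ i, h i ^ (Multiplicative.toAdd α i)
  map_one' := by simp
  map_mul' a b := by
    simp [toAdd_mul, Pi.add_apply, zpow_add, Finset.prod_mul_distrib]

/-- Auxiliary monoid homomorphism `α ↦ χ(α) yᵅ` into the Laurent polynomial ring
`kΓ = k[y₁^{±1},…,yₙ^{±1}]` (realized as the group algebra of `Γ = ℤⁿ`). -/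
noncomputable def scaleMonHom {k : Type*} [Field k] {n : ℕ}
    (χ : Multiplicative (Fin n → ℤ) →* kˣ) :
    Multiplicative (Fin n → ℤ) →* AddMonoidAlgebra k (Fin n → ℤ) where
  toFun α := ((χ α : k)) • AddMonoidAlgebra.of k (Fin n → ℤ) α
  map_one' := by
    show (↑(χ 1) : k) • (AddMonoidAlgebra.of k (Fin n → ℤ)) 1 = 1
    rw [map_one, map_one, Units.val_one, one_smul]
  map_mul' a b := by
    show (↑(χ (a * b)) : k) • (AddMonoidAlgebra.of k (Fin n → ℤ)) (a * b)
      = ((↑(χ a) : k) • (AddMonoidAlgebra.of k (Fin n → ℤ)) a) *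
        ((↑(χ b) : k) • (AddMonoidAlgebra.of k (Fin n → ℤ)) b)
    rw [map_mul, map_mul, Units.val_mul, smul_mul_smul_comm]

/-- The `k`-algebra automorphism of the Laurent polynomial ring scaling the monomial
`yᵅ` by `χ(α)`, for a character `χ : Γ → kˣ`. -/
noncomputable def lactM {k : Type*} [Field k] {n : ℕ}
    (χ : Multiplicative (Fin n → ℤ) →* kˣ) :
    AddMonoidAlgebra k (Fin n → ℤ) →ₐ[k] AddMonoidAlgebra k (Fin n → ℤ) :=
  AddMonoidAlgebra.lift k _ (Fin n → ℤ) (scaleMonHom χ)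

/-- The action of `h ∈ H = (kˣ)ⁿ` on the Laurent polynomial ring, `yᵢ ↦ hᵢ yᵢ`. -/
noncomputable def lact {k : Type*} [Field k] {n : ℕ} (h : Fin n → kˣ) :
    AddMonoidAlgebra k (Fin n → ℤ) →ₐ[k] AddMonoidAlgebra k (Fin n → ℤ) :=
  lactM (powChar h)

/-! Everything happens coefficientwise: a character `χ` multiplies the coefficient of `yᵅ` by
`χ(α)`.  So a Laurent polynomial is fixed by a set `X` of characters iff its support lies in the
common kernel `T` of `X`, and an `X`-stable ideal `I` is generated by `I ∩ kT`: if the support of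
`f ∈ I` meets two cosets of `T`, some `χ ∈ X` takes different values `u ≠ v` there, and `f` is a
combination of `χ·f - u f` and `χ·f - v f`, elements of `I` with smaller support; if the support
lies in a single coset `γ + T`, then `f y_{-γ} ∈ I ∩ kT`.  For `X = S^⊥` the common kernel is
`S`, because the characters `σ(-, β)` vanish on `S` and detect every `α ∉ S`. -/

open AddMonoidAlgebra

section LaurentAction

variable {k : Type*} [Field k] {n : ℕ}

lemma lactM_single (χ : Multiplicative (Fin n → ℤ) →* kˣ) (α : Fin n → ℤ) (c : k) :
    lactM χ (single α c) = single α ((χ (Multiplicative.ofAdd α) : k) * c) := by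
  rw [lactM, lift_single]
  change c • ((χ (Multiplicative.ofAdd α) : k) • single α 1) = _
  rw [smul_smul, smul_single', mul_one, mul_comm]

lemma lactM_coeff (χ : Multiplicative (Fin n → ℤ) →* kˣ) (f : AddMonoidAlgebra k (Fin n → ℤ))
    (a : Fin n → ℤ) : (lactM χ f).coeff a = (χ (Multiplicative.ofAdd a) : k) * f.coeff a := by
  induction f using AddMonoidAlgebra.induction_linear with
  | zero => simp
  | add f g hf hg => simp only [map_add, coeff_add, Finsupp.add_apply, hf, hg, mul_add]
  | single α c =>
    rw [lactM_single, coeff_single, coeff_single, Finsupp.single_apply, Finsupp.single_apply]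
    split_ifs <;> simp_all

lemma lactM_eq_self_iff (χ : Multiplicative (Fin n → ℤ) →* kˣ)
    (f : AddMonoidAlgebra k (Fin n → ℤ)) :
    lactM χ f = f ↔ ∀ a ∈ f.coeff.support, χ (Multiplicative.ofAdd a) = 1 := by
  rw [← coeff_inj, Finsupp.ext_iff]
  refine forall_congr' fun a => ?_
  rw [lactM_coeff, Finsupp.mem_support_iff]
  by_cases ha : f.coeff a = 0
  · simp [ha]
  · simp [ha, mul_eq_right₀ ha]

lemma support_lactM_sub_smul_ssubset (χ : Multiplicative (Fin n → ℤ) →* kˣ)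
    {f : AddMonoidAlgebra k (Fin n → ℤ)} {a : Fin n → ℤ} (ha : a ∈ f.coeff.support) :
    (lactM χ f - (χ (Multiplicative.ofAdd a) : k) • f).coeff.support ⊂ f.coeff.support := by
  refine lt_of_le_of_lt (fun x hx => ?_) (Finset.erase_ssubset ha)
  rw [Finsupp.mem_support_iff, coeff_sub, coeff_smul, Finsupp.sub_apply, Finsupp.smul_apply,
    lactM_coeff, smul_eq_mul, ← sub_mul] at hx
  refine Finset.mem_erase.mpr ⟨?_, Finsupp.mem_support_iff.mpr (right_ne_zero_of_mul hx)⟩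
  rintro rfl
  simp at hx

def commonKer (X : Set (Multiplicative (Fin n → ℤ) →* kˣ)) : Set (Fin n → ℤ) :=
  {α | ∀ χ ∈ X, χ (Multiplicative.ofAdd α) = 1}

variable {X : Set (Multiplicative (Fin n → ℤ) →* kˣ)}

theorem forall_lactM_eq_self_iff_mem_supported (f : AddMonoidAlgebra k (Fin n → ℤ)) :
    (∀ χ ∈ X, lactM χ f = f) ↔ f ∈ supported k k (commonKer X) := by
  simp only [lactM_eq_self_iff, mem_supported, Set.subset_def, Finset.mem_coe, commonKer]
  exact ⟨fun h a ha χ hχ => h χ hχ a ha, fun h χ hχ a ha => h a ha χ hχ⟩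

lemma mul_single_neg_mem_supported {f : AddMonoidAlgebra k (Fin n → ℤ)} {γ : Fin n → ℤ}
    (hf : ∀ a ∈ f.coeff.support, ∀ χ ∈ X,
      χ (Multiplicative.ofAdd a) = χ (Multiplicative.ofAdd γ)) :
    f * single (-γ) 1 ∈ supported k k (commonKer X) := by
  intro a ha χ hχ
  have hsupp : a + γ ∈ f.coeff.support := by
    simpa [coeff_mul_single_apply] using ha
  have hshift := hf _ hsupp χ hχ
  rwa [ofAdd_add, map_mul, mul_eq_right] at hshift

theorem Ideal.eq_span_inter_supported_commonKer (I : Ideal (AddMonoidAlgebra k (Fin n → ℤ)))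
    (hI : ∀ χ ∈ X, I ≤ I.comap (lactM χ)) :
    I = Ideal.span (↑I ∩ ↑(supported k k (commonKer X))) := by
  refine le_antisymm (fun f hf => ?_) (Ideal.span_le.mpr Set.inter_subset_left)
  induction hcard : f.coeff.support.card using Nat.strong_induction_on generalizing f with
  | _ m ih =>
  by_cases hsplit : ∃ a ∈ f.coeff.support, ∃ b ∈ f.coeff.support, ∃ χ ∈ X,
      χ (Multiplicative.ofAdd a) ≠ χ (Multiplicative.ofAdd b)
  · obtain ⟨a, ha, b, hb, χ, hχ, hab⟩ := hsplit
    have hsmaller : ∀ c ∈ f.coeff.support,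
        lactM χ f - (χ (Multiplicative.ofAdd c) : k) • f ∈ Ideal.span _ := fun c hc =>
      ih _ (hcard ▸ Finset.card_lt_card (support_lactM_sub_smul_ssubset χ hc)) _
        (I.sub_mem (hI χ hχ hf) (Submodule.smul_of_tower_mem _ _ hf)) rfl
    have hne : (χ (Multiplicative.ofAdd a) : k) - χ (Multiplicative.ofAdd b) ≠ 0 :=
      sub_ne_zero.mpr (Units.val_injective.ne hab)
    have hcomb : f = ((χ (Multiplicative.ofAdd a) : k) - χ (Multiplicative.ofAdd b))⁻¹ •
        ((lactM χ f - (χ (Multiplicative.ofAdd b) : k) • f) -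
          (lactM χ f - (χ (Multiplicative.ofAdd a) : k) • f)) := by
      rw [sub_sub_sub_cancel_left, ← sub_smul, smul_smul, inv_mul_cancel₀ hne, one_smul]
    rw [hcomb]
    exact Submodule.smul_of_tower_mem _ _ (Submodule.sub_mem _ (hsmaller b hb) (hsmaller a ha))
  · push Not at hsplit
    obtain hzero | ⟨γ, hγ⟩ := f.coeff.support.eq_empty_or_nonempty
    · rw [coeff_eq_zero.mp (Finsupp.support_eq_empty.mp hzero)]
      exact zero_mem _
    · have hunit : f = f * single (-γ) 1 * single γ 1 := by
        rw [mul_assoc, single_mul_single, neg_add_cancel, mul_one, ← one_def, mul_one]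
      rw [hunit]
      exact Ideal.mul_mem_right _ _ <| Ideal.subset_span
        ⟨I.mul_mem_right _ hf, mul_single_neg_mem_supported fun a ha χ hχ => hsplit a ha γ hγ χ hχ⟩

end LaurentAction

lemma span_single_eq_supported {k Γ : Type*} [Semiring k] [AddMonoid Γ] (p : Γ → Prop) :
    Submodule.span k {f : AddMonoidAlgebra k Γ | ∃ α, p α ∧ f = single α 1} =
      supported k k {α | p α} := by
  rw [supported_eq_span_single]
  congr 1
  ext f
  simp [eq_comm]

lemma commonKer_annihilator_radical {k : Type*} [Field k] {n : ℕ}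
    (σ : (Fin n → ℤ) → (Fin n → ℤ) → kˣ) (hmul₁ : ∀ α β γ, σ (α + β) γ = σ α γ * σ β γ) :
    commonKer {χ : Multiplicative (Fin n → ℤ) →* kˣ |
        ∀ α, (∀ β, σ α β = 1) → χ (Multiplicative.ofAdd α) = 1} =
      {α | ∀ β, σ α β = 1} := by
  refine Set.Subset.antisymm (fun α hα β => ?_) (fun α hα χ hχ => hχ α hα)
  exact hα (MonoidHom.mk' (fun γ => σ (Multiplicative.toAdd γ) β) fun _ _ => hmul₁ _ _ _)
    fun α' hα' => hα' β

theorem stmt_15_general {k : Type*} [Field k] {n : ℕ}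
    (σ : (Fin n → ℤ) → (Fin n → ℤ) → kˣ)
    (hmul₁ : ∀ α β γ, σ (α + β) γ = σ α γ * σ β γ) :
    -- (a)
    ({f : AddMonoidAlgebra k (Fin n → ℤ) |
        ∀ χ : Multiplicative (Fin n → ℤ) →* kˣ,
          (∀ α, (∀ β, σ α β = 1) → χ (Multiplicative.ofAdd α) = 1) → lactM χ f = f}
      = ↑(Submodule.span k {f : AddMonoidAlgebra k (Fin n → ℤ) |
          ∃ α, (∀ β, σ α β = 1) ∧ f = AddMonoidAlgebra.single α 1})) ∧
    -- (b)
    (∀ I : Ideal (AddMonoidAlgebra k (Fin n → ℤ)),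
      (∀ χ : Multiplicative (Fin n → ℤ) →* kˣ,
        (∀ α, (∀ β, σ α β = 1) → χ (Multiplicative.ofAdd α) = 1) →
        Ideal.comap (lactM χ) I = I) →
      I = Ideal.span (↑I ∩ ↑(Submodule.span k {f : AddMonoidAlgebra k (Fin n → ℤ) |
            ∃ α, (∀ β, σ α β = 1) ∧ f = AddMonoidAlgebra.single α 1}))) := by
  rw [span_single_eq_supported, ← commonKer_annihilator_radical σ hmul₁]
  refine ⟨Set.ext fun f => forall_lactM_eq_self_iff_mem_supported f, fun I hI => ?_⟩
  exact Ideal.eq_span_inter_supported_commonKer I fun χ hχ => (hI χ hχ).ge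

/-- Proposition 3.8(a),(b): `k` algebraically closed, `σ` an alternating
bicharacter on `Γ = ℤⁿ` with radical `S`, `H = Hom(Γ,kˣ)` acting on the group algebra
`kΓ` by `h·yᵅ = ⟨h,α⟩yᵅ`, and `S^⊥ = {h ∈ H : h ≡ 1 on S}`.  Then
(a) `(kΓ)^{S^⊥} = kS` (the span of the `yᵅ`, `α ∈ S`), and
(b) every `S^⊥`-stable ideal `I` of `kΓ` satisfies `I = (kΓ)(I ∩ kS)`. -/
theorem stmt_15 {k : Type*} [Field k] [IsAlgClosed k] {n : ℕ}
    (σ : (Fin n → ℤ) → (Fin n → ℤ) → kˣ)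
    (halt : ∀ α, σ α α = 1)
    (hmul₁ : ∀ α β γ, σ (α + β) γ = σ α γ * σ β γ)
    (hmul₂ : ∀ α β γ, σ α (β + γ) = σ α β * σ α γ) :
    -- (a)
    ({f : AddMonoidAlgebra k (Fin n → ℤ) |
        ∀ χ : Multiplicative (Fin n → ℤ) →* kˣ,
          (∀ α, (∀ β, σ α β = 1) → χ (Multiplicative.ofAdd α) = 1) → lactM χ f = f}
      = ↑(Submodule.span k {f : AddMonoidAlgebra k (Fin n → ℤ) |
          ∃ α, (∀ β, σ α β = 1) ∧ f = AddMonoidAlgebra.single α 1})) ∧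
    -- (b)
    (∀ I : Ideal (AddMonoidAlgebra k (Fin n → ℤ)),
      (∀ χ : Multiplicative (Fin n → ℤ) →* kˣ,
        (∀ α, (∀ β, σ α β = 1) → χ (Multiplicative.ofAdd α) = 1) →
        Ideal.comap (lactM χ) I = I) →
      I = Ideal.span (↑I ∩ ↑(Submodule.span k {f : AddMonoidAlgebra k (Fin n → ℤ) |
            ∃ α, (∀ β, σ α β = 1) ∧ f = AddMonoidAlgebra.single α 1}))) :=
  stmt_15_general σ hmul₁
end

section
/- There exists a 2-cocycle c : Γ × Γ → k^× such that c(α,β) = 1 for all α ∈ S and β ∈ Γ, and c(α,β)c(β,α)^{-1} = σ(α,β) for all α, β ∈ Γ. -/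
/-! Viewing `kˣ` additively, `σ` is an alternating `ℤ`-bilinear form `B`. Pick a
basis `b` of `Γ` adapted to `S = ker B` (Smith normal form), so that the components
`αᵢ bᵢ` of every `α ∈ S` lie in `S` again. The "strictly lower triangular half"
`c(α, β) = ∏_{j < i} σ(bᵢ, bⱼ) ^ (αᵢ βⱼ)` of `σ` is bimultiplicative, hence a 2-cocycle;
`c(α, β) c(β, α)⁻¹ = σ(α, β)` because `σ` is alternating; and
`c(α, β) = ∏ᵢ σ(αᵢ bᵢ, ∑_{j < i} βⱼ bⱼ)`, which is trivial for `α ∈ S`. -/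

open Module

theorem Module.Basis.SmithNormalForm.repr_smul_mem {R M ι : Type*} [CommRing R]
    [AddCommGroup M] [Module R M] {N : Submodule R M} {n : ℕ}
    (snf : Basis.SmithNormalForm N ι n) {x : M} (hx : x ∈ N) (i : ι) :
    snf.bM.repr x i • snf.bM i ∈ N := by
  by_cases hi : i ∈ Set.range snf.f
  · obtain ⟨t, rfl⟩ := hi
    have h := congrFun (snf.repr_comp_embedding_eq_smul ⟨x, hx⟩) t
    rw [Function.comp_apply] at h
    rw [h, Pi.smul_apply', smul_eq_mul, mul_comm, mul_smul, ← snf.snf]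
    exact N.smul_mem _ (snf.bN t).2
  · rw [snf.repr_eq_zero_of_notMem_range ⟨x, hx⟩ hi, zero_smul]
    exact N.zero_mem

namespace LinearMap

section LowerHalf

variable {ι R M P : Type*} [LinearOrder ι] [CommRing R] [AddCommGroup M] [Module R M]
  [AddCommGroup P] [Module R P]

noncomputable def lowerProj (b : Basis ι R M) (i : ι) : M →ₗ[R] M :=
  b.constr R fun j => if j < i then b j else 0

noncomputable def lowerHalf (b : Basis ι R M) (B : M →ₗ[R] M →ₗ[R] P) : M →ₗ[R] M →ₗ[R] P :=
  b.constr R fun i => B (b i) ∘ₗ lowerProj b i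

theorem lowerHalf_basis_basis (b : Basis ι R M) (B : M →ₗ[R] M →ₗ[R] P) (i j : ι) :
    lowerHalf b B (b i) (b j) = if j < i then B (b i) (b j) else 0 := by
  simp only [lowerHalf, lowerProj, Basis.constr_basis, comp_apply]
  split_ifs <;> simp

theorem IsAlt.lowerHalf_sub_flip {B : M →ₗ[R] M →ₗ[R] P} (hB : B.IsAlt) (b : Basis ι R M) :
    lowerHalf b B - (lowerHalf b B).flip = B := by
  refine b.ext fun i => b.ext fun j => ?_
  simp only [sub_apply, flip_apply, lowerHalf_basis_basis]
  rcases lt_trichotomy i j with h | rfl | h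
  · simp [h, h.not_gt, hB.neg]
  · simp [hB.self_eq_zero]
  · simp [h, h.not_gt]

theorem lowerHalf_apply_eq_zero {B : M →ₗ[R] M →ₗ[R] P} (b : Basis ι R M) {x : M}
    (hx : ∀ i, B (b.repr x i • b i) = 0) : lowerHalf b B x = 0 := by
  rw [lowerHalf, Basis.constr_apply]
  refine Finset.sum_eq_zero fun i _ => ?_
  dsimp only
  rw [← smul_comp, ← map_smul, hx, zero_comp]

end LowerHalf

theorem IsAlt.exists_sub_flip_eq_and_ker_le {R M P : Type*} [CommRing R] [IsDomain R]
    [IsPrincipalIdealRing R] [AddCommGroup M] [Module R M] [Module.Free R M] [Module.Finite R M]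
    [AddCommGroup P] [Module R P] {B : M →ₗ[R] M →ₗ[R] P} (hB : B.IsAlt) :
    ∃ L : M →ₗ[R] M →ₗ[R] P, L - L.flip = B ∧ ker B ≤ ker L := by
  obtain ⟨_, snf⟩ := (ker B).smithNormalForm (Module.finBasis R M)
  exact ⟨lowerHalf snf.bM B, hB.lowerHalf_sub_flip snf.bM,
    fun x hx => lowerHalf_apply_eq_zero snf.bM fun i => snf.repr_smul_mem hx i⟩

def ofBimultiplicative {M G : Type*} [AddCommGroup M] [CommGroup G] (σ : M → M → G)
    (h₁ : ∀ α β γ, σ (α + β) γ = σ α γ * σ β γ) (h₂ : ∀ α β γ, σ α (β + γ) = σ α β * σ α γ) :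
    M →ₗ[ℤ] M →ₗ[ℤ] Additive G :=
  AddMonoidHom.toIntLinearMap <| AddMonoidHom.mk'
    (fun α => AddMonoidHom.toIntLinearMap <|
      AddMonoidHom.mk' (fun β => Additive.ofMul (σ α β)) fun β γ => by simp [h₂])
    fun α β => by ext; simp [h₁]

end LinearMap

/-- there is a 2-cocycle `c` on `Γ = ℤⁿ` with values in `kˣ` which is
trivial on `S × Γ` (where `S = rad σ`) and satisfies `c(α,β)c(β,α)⁻¹ = σ(α,β)`. -/
theorem stmt_17 {k : Type*} [Field k] {n : ℕ}
    (σ : (Fin n → ℤ) → (Fin n → ℤ) → kˣ)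
    (halt : ∀ α, σ α α = 1)
    (hmul₁ : ∀ α β γ, σ (α + β) γ = σ α γ * σ β γ)
    (hmul₂ : ∀ α β γ, σ α (β + γ) = σ α β * σ α γ) :
    ∃ c : (Fin n → ℤ) → (Fin n → ℤ) → kˣ,
      (∀ α β γ, c α β * c (α + β) γ = c β γ * c α (β + γ)) ∧
      (∀ α, (∀ γ, σ α γ = 1) → ∀ β, c α β = 1) ∧
      (∀ α β, c α β * (c β α)⁻¹ = σ α β) := by
  set B := LinearMap.ofBimultiplicative σ hmul₁ hmul₂
  have hB : B.IsAlt := fun α => congrArg Additive.ofMul (halt α)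
  obtain ⟨L, hL, hker⟩ := hB.exists_sub_flip_eq_and_ker_le
  refine ⟨fun α β => (L α β).toMul, fun α β γ => ?_, fun α hα β => ?_, fun α β => ?_⟩
  · simp only [map_add, LinearMap.add_apply, toMul_add]
    ac_rfl
  · have hα' : α ∈ LinearMap.ker B := LinearMap.ext fun γ => congrArg Additive.ofMul (hα γ)
    change Additive.toMul (L α β) = 1
    rw [LinearMap.mem_ker.mp (hker hα')]
    rfl
  · change Additive.toMul ((L - L.flip) α β) = Additive.toMul (B α β)
    rw [hL]
end

section
/- There exists an alternating bicharacter c on Γ = ℤ^n with values in k^× such that c(α,β)² = σ(α,β) for all α, β ∈ Γ, and c(α,β) = 1 whenever σ(α,β) = 1. -/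
private lemma units_sq_eq_one {k : Type*} [Field k] {x : kˣ} (h : x ^ 2 = 1) :
    x = 1 ∨ x = -1 := by
  have h2 : (x : k) ^ 2 = 1 := by
    have := congrArg Units.val h; push_cast at this; exact this
  rcases sq_eq_one_iff.mp h2 with h1 | h1
  · exact Or.inl (Units.ext h1)
  · exact Or.inr (Units.ext (by rw [h1]; simp))

private lemma units_exists_sqrt {k : Type*} [Field k] [IsAlgClosed k] (x : kˣ) :
    ∃ y : kˣ, y ^ 2 = x := by
  obtain ⟨z, hz⟩ := IsAlgClosed.exists_pow_nat_eq (x : k) (n := 2) (by norm_num)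
  have hz0 : z ≠ 0 := by
    intro h0
    rw [h0] at hz
    simp only [ne_eq, zero_pow, OfNat.ofNat_ne_zero, not_false_eq_true] at hz
    exact x.ne_zero hz.symm
  refine ⟨Units.mk0 z hz0, Units.ext ?_⟩
  push_cast
  exact hz

private lemma exists_sqrt_hom {k : Type*} [Field k] [IsAlgClosed k] (G : Subgroup kˣ)
    (h : (-1 : kˣ) ∉ G ∨ ringChar k = 2) :
    ∃ s : G →* kˣ, ∀ g : G, s g ^ 2 = (g : kˣ) := by
  obtain ⟨H, hGH, hinj, hsurj⟩ :
      ∃ H : Subgroup kˣ, G ≤ H ∧ (∀ x : kˣ, x ∈ H → x ^ 2 = 1 → x = 1) ∧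
        (∀ x : kˣ, x ∈ H → ∃ y ∈ H, y ^ 2 = x) := by
    rcases h with hne | hchar
    · -- Zorn's lemma: take H maximal among subgroups not containing -1
      obtain ⟨H, hGH, hmax⟩ := zorn_le_nonempty₀ {H : Subgroup kˣ | (-1 : kˣ) ∉ H}
        (fun c hcS hchain y hy => by
          refine ⟨sSup c, ?_, fun z hz => le_sSup hz⟩
          intro hmem
          rw [Subgroup.mem_sSup_of_directedOn ⟨y, hy⟩ hchain.directedOn] at hmem
          obtain ⟨t, htc, hmt⟩ := hmem
          exact hcS htc hmt) G hne
      refine ⟨H, hGH, ?_, ?_⟩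
      · intro x hx hx2
        rcases units_sq_eq_one hx2 with h1 | h1
        · exact h1
        · exact absurd (h1 ▸ hx) hmax.1
      · intro x hx
        obtain ⟨r, hr⟩ := units_exists_sqrt x
        by_cases hrH : r ∈ H
        · exact ⟨r, hrH, hr⟩
        by_cases hrH' : -r ∈ H
        · exact ⟨-r, hrH', by rw [neg_sq]; exact hr⟩
        exfalso
        -- H ⊔ ⟨r⟩ still avoids -1, contradicting maximality
        have hS : (-1 : kˣ) ∉ H ⊔ Subgroup.zpowers r := by
          intro hmem
          rw [Subgroup.mem_sup] at hmem
          obtain ⟨a, haH, b, hb, hab⟩ := hmem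
          obtain ⟨t, rfl⟩ := hb
          change a * r ^ t = -1 at hab
          have hr2 : r ^ (2 : ℤ) = x := by
            rw [show (2 : ℤ) = ((2 : ℕ) : ℤ) from rfl, zpow_natCast, hr]
          rcases Int.even_or_odd t with ⟨m, hm⟩ | ⟨m, hm⟩
          · have hbH : r ^ t ∈ H := by
              rw [hm, ← two_mul, zpow_mul, hr2]
              exact Subgroup.zpow_mem H hx m
            exact hmax.1 (hab ▸ mul_mem haH hbH)
          · have hrt : r ^ t = (x ^ m) * r := by
              rw [hm, zpow_add, zpow_mul, hr2, zpow_one]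
            rw [hrt] at hab
            have h1 : (a * x ^ m) * (-r) = 1 := by
              rw [mul_neg, mul_assoc, hab, neg_neg]
            have h2 : (a * x ^ m)⁻¹ = -r := inv_eq_of_mul_eq_one_right h1
            have hmemH : -r ∈ H :=
              h2 ▸ inv_mem (mul_mem haH (Subgroup.zpow_mem H hx m))
            exact hrH' hmemH
        have hle : H ⊔ Subgroup.zpowers r ≤ H := hmax.2 hS le_sup_left
        exact hrH (hle (Subgroup.mem_sup_right (Subgroup.mem_zpowers r)))
    · -- characteristic 2: squaring is bijective on all of kˣ
      refine ⟨⊤, le_top, ?_, fun x _ => by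
        obtain ⟨y, hy⟩ := units_exists_sqrt x; exact ⟨y, trivial, hy⟩⟩
      intro x _ hx2
      rcases units_sq_eq_one hx2 with h1 | h1
      · exact h1
      · -- -1 = 1 in characteristic 2
        have h2 : (2 : k) = 0 := by
          have := ringChar.Nat.cast_ringChar (R := k)
          rw [hchar] at this; exact_mod_cast this
        have : (-1 : k) = 1 := by linear_combination -h2
        rw [h1]; exact Units.ext (by simpa using this)
  -- squaring is a bijective endomorphism of H
  have hbij : Function.Bijective (powMonoidHom 2 : H →* H) := by
    constructor
    · intro a b hab
      have hab' : (a : kˣ) ^ 2 = (b : kˣ) ^ 2 := by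
        have := congrArg (Subtype.val) hab
        simpa [powMonoidHom] using this
      have h1 : ((a : kˣ) * (b : kˣ)⁻¹) ^ 2 = 1 := by
        rw [mul_pow, inv_pow, hab', mul_inv_cancel]
      have := hinj _ (mul_mem a.2 (inv_mem b.2)) h1
      have : (a : kˣ) = b := by
        have := mul_inv_eq_one.mp this; exact this
      exact Subtype.ext this
    · intro x
      obtain ⟨y, hyH, hy⟩ := hsurj x x.2
      exact ⟨⟨y, hyH⟩, Subtype.ext (by simpa [powMonoidHom] using hy)⟩
  let e : H ≃* H := MulEquiv.ofBijective _ hbij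
  refine ⟨H.subtype.comp ((e.symm.toMonoidHom).comp (Subgroup.inclusion hGH)), fun g => ?_⟩
  have := e.apply_symm_apply (Subgroup.inclusion hGH g)
  have h2 : (e.symm (Subgroup.inclusion hGH g)) ^ 2 = Subgroup.inclusion hGH g := this
  have := congrArg Subtype.val h2
  simpa using this

/-- `k` algebraically closed, `(qᵢⱼ)` multiplicatively antisymmetric,
`σ(α,β) = ∏ᵢⱼ qᵢⱼ^(αᵢβⱼ)`, and `-1 ∉ ⟨qᵢⱼ⟩` or `char k = 2`.  Then there is an
alternating bicharacter `c` on `ℤⁿ` with `c² = σ` and `c(α,β) = 1` whenever `σ(α,β) = 1`. -/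
theorem stmt_18 {k : Type*} [Field k] [IsAlgClosed k] {n : ℕ}
    (q : Fin n → Fin n → kˣ)
    (hdiag : ∀ i, q i i = 1)
    (hanti : ∀ i j, q j i = (q i j)⁻¹)
    (hq : (-1 : kˣ) ∉ Subgroup.closure {x : kˣ | ∃ i j, q i j = x} ∨ ringChar k = 2) :
    ∃ c : (Fin n → ℤ) → (Fin n → ℤ) → kˣ,
      (∀ α β γ, c (α + β) γ = c α γ * c β γ) ∧
      (∀ α β γ, c α (β + γ) = c α β * c α γ) ∧
      (∀ α, c α α = 1) ∧
      (∀ α β, (c α β) ^ 2 = ∏ i, ∏ j, q i j ^ (α i * β j)) ∧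
      (∀ α β, (∏ i, ∏ j, q i j ^ (α i * β j)) = 1 → c α β = 1) := by
  set G := Subgroup.closure {x : kˣ | ∃ i j, q i j = x} with hG
  obtain ⟨s, hs⟩ := exists_sqrt_hom G hq
  set Sig : (Fin n → ℤ) → (Fin n → ℤ) → kˣ :=
    fun α β => ∏ i, ∏ j, q i j ^ (α i * β j) with hSig
  have hmem : ∀ α β, Sig α β ∈ G := by
    intro α β
    refine prod_mem fun i _ => prod_mem fun j _ => Subgroup.zpow_mem _ ?_ _
    exact Subgroup.subset_closure ⟨i, j, rfl⟩
  have haddl : ∀ α β γ, Sig (α + β) γ = Sig α γ * Sig β γ := by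
    intro α β γ
    simp only [hSig, Pi.add_apply, add_mul, zpow_add, Finset.prod_mul_distrib]
  have haddr : ∀ α β γ, Sig α (β + γ) = Sig α β * Sig α γ := by
    intro α β γ
    simp only [hSig, Pi.add_apply, mul_add, zpow_add, Finset.prod_mul_distrib]
  have halt : ∀ α, Sig α α = 1 := by
    intro α
    show (∏ i, ∏ j, q i j ^ (α i * α j)) = 1
    rw [← Finset.prod_product']
    refine Finset.prod_ninvolution Prod.swap ?_ ?_ (fun a => Finset.mem_univ _) (fun a => rfl)
    · intro a
      simp only [Prod.fst_swap, Prod.snd_swap, hanti a.1 a.2, inv_zpow]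
      rw [mul_comm (α a.2) (α a.1), mul_inv_cancel]
    · intro a hfa heq
      apply hfa
      have h12 : a.2 = a.1 := congrArg Prod.fst heq
      rw [h12, hdiag, one_zpow]
  refine ⟨fun α β => s ⟨Sig α β, hmem α β⟩, ?_, ?_, ?_, ?_, ?_⟩
  · intro α β γ
    show s ⟨Sig (α + β) γ, hmem _ _⟩ = s ⟨Sig α γ, hmem _ _⟩ * s ⟨Sig β γ, hmem _ _⟩
    have hmul : (⟨Sig α γ, hmem α γ⟩ : G) * ⟨Sig β γ, hmem β γ⟩
        = ⟨Sig (α + β) γ, hmem (α + β) γ⟩ := Subtype.ext (haddl α β γ).symm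
    rw [← hmul, map_mul]
  · intro α β γ
    show s ⟨Sig α (β + γ), hmem _ _⟩ = s ⟨Sig α β, hmem _ _⟩ * s ⟨Sig α γ, hmem _ _⟩
    have hmul : (⟨Sig α β, hmem α β⟩ : G) * ⟨Sig α γ, hmem α γ⟩
        = ⟨Sig α (β + γ), hmem α (β + γ)⟩ := Subtype.ext (haddr α β γ).symm
    rw [← hmul, map_mul]
  · intro α
    show s ⟨Sig α α, hmem α α⟩ = 1
    have h1 : (⟨Sig α α, hmem α α⟩ : G) = 1 := Subtype.ext (halt α)
    rw [h1, map_one]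
  · intro α β
    exact hs _
  · intro α β hσ
    show s ⟨Sig α β, hmem α β⟩ = 1
    have h1 : (⟨Sig α β, hmem α β⟩ : G) = 1 := Subtype.ext hσ
    rw [h1, map_one]
end

section
/- Let v ⊆ w be subsets of {1,…,n}. Then: (a) S_w^⊥ ⊆ S_v^⊥ · Γ_w^⊥, i.e., every element of S_w^⊥ is a product of an element of S_v^⊥ and an element of Γ_w^⊥; (b) for every prime ideal P of R = k[y_1,…,y_n] with P ∩ {y_1,…,y_n} = {y_i : i ∈ w}, one has (P : S_v^⊥) ⊆ (P : S_w^⊥). -/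
/-!
Since `k` is algebraically closed, `kˣ` is divisible, hence injective as an abelian group. A
character `h ∈ S_w^⊥` is trivial on `S_v ∩ Γ_w ⊆ S_w`, so `a + b ↦ h(b)` is a well-defined character
of `S_v + Γ_w`; an extension `h₁` of it to `Γ` lies in `S_v^⊥`, and `h₁⁻¹ h ∈ Γ_w^⊥`.
For (b), a character in `Γ_w^⊥` fixes `y_i` for `i ∉ w` while `y_i ∈ P` for `i ∈ w`, so it acts
trivially modulo `P`; hence `(h₁ h₂)·f ∈ P` as soon as `h₁·f ∈ P`.
-/

open MvPolynomial

variable {k : Type*} [Field k] {n : ℕ}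

/-- The subgroup `Γ_u` of `Γ = ℤⁿ` generated by the standard basis vectors `ε_i`, `i ∉ u`. -/
def GammaU (u : Set (Fin n)) : AddSubgroup (Fin n → ℤ) :=
  AddSubgroup.closure {α | ∃ i ∉ u, α = Pi.single i 1}

/-- `S_u = rad(σ|_{Γ_u}) = {α ∈ Γ_u : σ(α,β) = 1 for all β ∈ Γ_u}`. -/
def SU (σ : (Fin n → ℤ) → (Fin n → ℤ) → kˣ) (u : Set (Fin n)) : Set (Fin n → ℤ) :=
  {α | α ∈ GammaU u ∧ ∀ β ∈ GammaU u, σ α β = 1}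

/-- The orthogonal `T^⊥ = {h ∈ H = Hom(Γ,kˣ) : ⟨h,α⟩ = 1 for all α ∈ T}`. -/
def perpSet (T : Set (Fin n → ℤ)) : Set (Multiplicative (Fin n → ℤ) →* kˣ) :=
  {h | ∀ α ∈ T, h (Multiplicative.ofAdd α) = 1}

/-- The action of `h ∈ H = Hom(Γ,kˣ)` on `R = k[y₁,…,yₙ]`, `yᵢ ↦ ⟨h,εᵢ⟩yᵢ`. -/
noncomputable def hact (h : Multiplicative (Fin n → ℤ) →* kˣ) :
    MvPolynomial (Fin n) k →ₐ[k] MvPolynomial (Fin n) k :=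
  aeval fun i => ((h (Multiplicative.ofAdd (Pi.single i 1)) : kˣ) : k) • X i

/-- `(I : T) = ⋂_{h ∈ T} h(I)` for a set `T` of characters. -/
noncomputable def resH (T : Set (Multiplicative (Fin n → ℤ) →* kˣ))
    (I : Ideal (MvPolynomial (Fin n) k)) : Ideal (MvPolynomial (Fin n) k) :=
  ⨅ h ∈ T, Ideal.comap (hact h) I

theorem AddMonoidHom.exists_comp_eq_of_ker_le {M N D : Type*} [AddCommGroup M] [AddCommGroup N]
    [AddCommGroup D] [DivisibleBy D ℤ] (g : M →+ N) (f : M →+ D) (hker : g.ker ≤ f.ker) :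
    ∃ ψ : N →+ D, ψ.comp g = f := by
  let e := QuotientAddGroup.quotientKerEquivRange g
  obtain ⟨ψ, hψ⟩ := (Module.Baer.of_divisible D).extension_property_addMonoidHom
    g.range.subtype g.range.subtype_injective
    ((QuotientAddGroup.lift g.ker f hker).comp e.symm.toAddMonoidHom)
  refine ⟨ψ, AddMonoidHom.ext fun m => ?_⟩
  have he : e.symm (g.rangeRestrict m) = (m : M ⧸ g.ker) := e.symm_apply_eq.mpr rfl
  simpa [he] using DFunLike.congr_fun hψ (g.rangeRestrict m)

theorem MonoidHom.exists_mul_eq_of_map_inf_eq_one {G D : Type*} [AddCommGroup G] [CommGroup D]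
    [DivisibleBy (Additive D) ℤ] (A B : AddSubgroup G) (χ : Multiplicative G →* D)
    (hχ : ∀ x ∈ A ⊓ B, χ (.ofAdd x) = 1) :
    ∃ χ₁ χ₂ : Multiplicative G →* D, (∀ a ∈ A, χ₁ (.ofAdd a) = 1) ∧
      (∀ b ∈ B, χ₂ (.ofAdd b) = 1) ∧ χ = χ₁ * χ₂ := by
  obtain ⟨ψ, hψ⟩ := AddMonoidHom.exists_comp_eq_of_ker_le (A.subtype.coprod B.subtype)
    ((MonoidHom.toAdditiveRight χ).comp (B.subtype.comp (AddMonoidHom.snd A B))) (by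
      rintro ⟨a, b⟩ hab
      have hb : (b : G) = -a := eq_neg_of_add_eq_zero_right hab
      have : (b : G) ∈ A ⊓ B := AddSubgroup.mem_inf.mpr ⟨hb ▸ A.neg_mem a.2, b.2⟩
      simpa using hχ _ this)
  have hψ' (a : A) (b : B) : ψ (a + b) = .ofMul (χ (.ofAdd b)) := DFunLike.congr_fun hψ (a, b)
  refine ⟨AddMonoidHom.toMultiplicativeLeft ψ, (AddMonoidHom.toMultiplicativeLeft ψ)⁻¹ * χ,
    fun a ha => ?_, fun b hb => ?_, (mul_inv_cancel_left _ _).symm⟩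
  · simpa using congrArg Additive.toMul (hψ' ⟨a, ha⟩ 0)
  · simpa [inv_mul_eq_one] using congrArg Additive.toMul (hψ' 0 ⟨b, hb⟩)

theorem IsAlgClosed.surjective_units_zpow [IsAlgClosed k] {z : ℤ}
    (hz : z ≠ 0) : Function.Surjective fun u : kˣ => u ^ z := by
  intro a
  obtain ⟨c, hc⟩ := IsAlgClosed.exists_pow_nat_eq (a : k) (Int.natAbs_pos.mpr hz)
  have hc0 : c ≠ 0 := by
    rintro rfl
    exact a.ne_zero (by rw [← hc, zero_pow (Int.natAbs_ne_zero.mpr hz)])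
  have hu : Units.mk0 c hc0 ^ z.natAbs = a := Units.ext (by simpa using hc)
  rcases Int.natAbs_eq z with h | h
  · exact ⟨Units.mk0 c hc0, by beta_reduce; rw [h, zpow_natCast, hu]⟩
  · exact ⟨(Units.mk0 c hc0)⁻¹, by
      beta_reduce; rw [h, zpow_neg, inv_zpow, inv_inv, zpow_natCast, hu]⟩

noncomputable instance IsAlgClosed.divisibleByAdditiveUnits [IsAlgClosed k] :
    DivisibleBy (Additive kˣ) ℤ :=
  divisibleByOfSMulRightSurj _ _ fun hz a =>
    let ⟨u, hu⟩ := IsAlgClosed.surjective_units_zpow (k := k) hz a.toMul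
    ⟨.ofMul u, by beta_reduce at hu ⊢; rw [← ofMul_zpow, hu, ofMul_toMul]⟩

section Radical

variable (σ : (Fin n → ℤ) → (Fin n → ℤ) → kˣ)

theorem GammaU_anti {v w : Set (Fin n)} (hvw : v ⊆ w) : GammaU w ≤ GammaU v :=
  AddSubgroup.closure_mono fun _ ⟨i, hi, hα⟩ => ⟨i, fun hv => hi (hvw hv), hα⟩

def SU.addSubgroup (hσ : ∀ α β γ, σ (α + β) γ = σ α γ * σ β γ) (u : Set (Fin n)) :
    AddSubgroup (Fin n → ℤ) where
  carrier := SU σ u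
  add_mem' ha hb := ⟨add_mem ha.1 hb.1, fun β hβ => by rw [hσ, ha.2 β hβ, hb.2 β hβ, mul_one]⟩
  zero_mem' := ⟨zero_mem _, fun β _ => by simpa using hσ 0 0 β⟩
  neg_mem' {α} ha := ⟨neg_mem ha.1, fun β hβ => by
    have h0 : σ 0 β = 1 := by simpa using hσ 0 0 β
    rwa [← neg_add_cancel α, hσ, ha.2 β hβ, mul_one] at h0⟩

theorem SU.mem_addSubgroup (hσ : ∀ α β γ, σ (α + β) γ = σ α γ * σ β γ) {u : Set (Fin n)}
    {α : Fin n → ℤ} : α ∈ SU.addSubgroup σ hσ u ↔ α ∈ SU σ u :=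
  Iff.rfl

theorem mem_SU_of_mem_GammaU {v w : Set (Fin n)} (hvw : v ⊆ w) {α : Fin n → ℤ} (hα : α ∈ SU σ v)
    (hαw : α ∈ GammaU w) : α ∈ SU σ w :=
  ⟨hαw, fun β hβ => hα.2 β (GammaU_anti hvw hβ)⟩

theorem exists_mul_eq_of_mem_perpSet_SU [IsAlgClosed k]
    (hσ : ∀ α β γ, σ (α + β) γ = σ α γ * σ β γ) {v w : Set (Fin n)} (hvw : v ⊆ w) :
    ∀ h ∈ perpSet (k := k) (SU σ w), ∃ h₁ ∈ perpSet (k := k) (SU σ v),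
      ∃ h₂ ∈ perpSet (k := k) (GammaU w : Set (Fin n → ℤ)), h = h₁ * h₂ := by
  intro h hh
  obtain ⟨h₁, h₂, hh₁, hh₂, rfl⟩ := MonoidHom.exists_mul_eq_of_map_inf_eq_one
    (SU.addSubgroup σ hσ v) (GammaU w) h fun α hα => hh α (mem_SU_of_mem_GammaU σ hvw
      ((SU.mem_addSubgroup σ hσ).mp hα.1) hα.2)
  exact ⟨h₁, fun α hα => hh₁ α ((SU.mem_addSubgroup σ hσ).mpr hα), h₂, hh₂, rfl⟩

end Radical

theorem hact_mul (h₁ h₂ : Multiplicative (Fin n → ℤ) →* kˣ) :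
    hact (k := k) (h₁ * h₂) = (hact h₂).comp (hact h₁) :=
  algHom_ext fun i => by simp [hact, smul_smul]

theorem le_comap_hact {P : Ideal (MvPolynomial (Fin n) k)} {w : Set (Fin n)}
    (hP : ∀ i ∈ w, X i ∈ P) {h : Multiplicative (Fin n → ℤ) →* kˣ}
    (hh : h ∈ perpSet (GammaU w : Set (Fin n → ℤ))) : P ≤ P.comap (hact h) := by
  have hquot : (Ideal.Quotient.mkₐ k P).comp (hact h) = Ideal.Quotient.mkₐ k P := by
    refine algHom_ext fun i => ?_
    simp only [AlgHom.comp_apply, hact, aeval_X, Ideal.Quotient.mkₐ_eq_mk, map_smul]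
    by_cases hi : i ∈ w
    · rw [Ideal.Quotient.eq_zero_iff_mem.mpr (hP i hi), smul_zero]
    · rw [hh _ (AddSubgroup.subset_closure ⟨i, hi, rfl⟩), Units.val_one, one_smul]
  intro g hg
  rw [Ideal.mem_comap]
  simpa only [AlgHom.comp_apply, Ideal.Quotient.mkₐ_eq_mk, Ideal.Quotient.eq_zero_iff_mem.mpr hg,
    Ideal.Quotient.eq_zero_iff_mem] using DFunLike.congr_fun hquot g

theorem resH_le_resH {T T' : Set (Multiplicative (Fin n → ℤ) →* kˣ)}
    {P : Ideal (MvPolynomial (Fin n) k)}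
    (hT : ∀ h ∈ T', ∃ h₁ ∈ T, ∃ h₂, P ≤ P.comap (hact h₂) ∧ h = h₁ * h₂) :
    resH T P ≤ resH T' P := by
  intro f hf
  simp only [resH, Ideal.mem_iInf, Ideal.mem_comap] at hf ⊢
  intro h hh
  obtain ⟨h₁, hh₁, h₂, hh₂, rfl⟩ := hT h hh
  rw [hact_mul, AlgHom.comp_apply, ← Ideal.mem_comap]
  exact hh₂ (hf h₁ hh₁)

theorem stmt_19_general {k : Type*} [Field k] [IsAlgClosed k] {n : ℕ}
    (σ : (Fin n → ℤ) → (Fin n → ℤ) → kˣ)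
    (hmul₁ : ∀ α β γ, σ (α + β) γ = σ α γ * σ β γ)
    (v w : Set (Fin n)) (hvw : v ⊆ w) :
    -- (a)
    (∀ h ∈ perpSet (k := k) (SU σ w),
      ∃ h₁ ∈ perpSet (k := k) (SU σ v),
        ∃ h₂ ∈ perpSet (k := k) (↑(GammaU (n := n) w) : Set (Fin n → ℤ)),
          h = h₁ * h₂) ∧
    -- (b)
    (∀ P : Ideal (MvPolynomial (Fin n) k), P.IsPrime →
      (∀ i, X i ∈ P ↔ i ∈ w) →
      resH (perpSet (SU σ v)) P ≤ resH (perpSet (SU σ w)) P) := by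
  have part_a := exists_mul_eq_of_mem_perpSet_SU σ hmul₁ hvw
  refine ⟨part_a, fun P _ hPw => resH_le_resH fun h hh => ?_⟩
  obtain ⟨h₁, hh₁, h₂, hh₂, rfl⟩ := part_a h hh
  exact ⟨h₁, hh₁, h₂, le_comap_hact (fun i hi => (hPw i).2 hi) hh₂, rfl⟩

/-- Lemma 4.8: for `v ⊆ w ⊆ {1,…,n}` (`k` algebraically closed, `σ` an
alternating bicharacter on `Γ = ℤⁿ`):
(a) `S_w^⊥ ⊆ S_v^⊥ · Γ_w^⊥`;
(b) `(P : S_v^⊥) ⊆ (P : S_w^⊥)` for every `P ∈ spec_w R`. -/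
theorem stmt_19 {k : Type*} [Field k] [IsAlgClosed k] {n : ℕ}
    (σ : (Fin n → ℤ) → (Fin n → ℤ) → kˣ)
    (halt : ∀ α, σ α α = 1)
    (hmul₁ : ∀ α β γ, σ (α + β) γ = σ α γ * σ β γ)
    (hmul₂ : ∀ α β γ, σ α (β + γ) = σ α β * σ α γ)
    (v w : Set (Fin n)) (hvw : v ⊆ w) :
    -- (a)
    (∀ h ∈ perpSet (k := k) (SU σ w),
      ∃ h₁ ∈ perpSet (k := k) (SU σ v),
        ∃ h₂ ∈ perpSet (k := k) (↑(GammaU (n := n) w) : Set (Fin n → ℤ)),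
          h = h₁ * h₂) ∧
    -- (b)
    (∀ P : Ideal (MvPolynomial (Fin n) k), P.IsPrime →
      (∀ i, X i ∈ P ↔ i ∈ w) →
      resH (perpSet (SU σ v)) P ≤ resH (perpSet (SU σ w)) P) :=
  stmt_19_general σ hmul₁ v w hvw
end
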